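/- arXiv:1003.1506 — 2 statements merged into one kernel-verified Lean document; each statement's English description precedes it below -/
import Mathlib

section
/- Suppose J(r) = (1/L) V(|r|/L) where V : [0,∞) → ℝ is Lipschitz continuous with Lipschitz constant ℓ and V(r) = 0 for r > 1, and suppose Q ≤ L. Then for every configuration σ ∈ S_N, |H^l(σ) − H̄^{l,(0)}(F(σ))| ≤ 6 N Q ℓ / L. -/
/-!
Expanding `F(σ)(k)²` shows that `H̄^{l,(0)}(F σ) = -½ Σ_{x ≠ y} J̄(k(x), k(y)) σ(x) σ(y)`,
where `k(x)` is the cell of `x`: the `-Q` in the diagonal part cancels the self-interaction.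
Each `J̄(k, l)` is an average of `J(x' - y')` over pairs of sites of the two cells, and
`|(x - y) - (x' - y')| ≤ 2Q`, so by the Lipschitz bound `|J(x - y) - J̄(k(x), k(y))| ≤ 2Qℓ/L²`;
by the support condition this vanishes unless `|x - y| ≤ L + 2Q ≤ 3L`. Each of the `N` sites has
at most `6L` such partners, which gives `½ · N · 6L · 2Qℓ/L² = 6NQℓ/L`.
-/

open Finset

/-- The spin value of a site: `true ↦ +1`, `false ↦ -1`. -/
def spin (b : Bool) : ℤ := if b then 1 else -1

/-- The coarse cell `C_k = {kQ, …, (k+1)Q - 1}` inside the lattice `Fin (M*Q)`. -/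
def cell (M Q : ℕ) (k : Fin M) : Finset (Fin (M * Q)) :=
  univ.filter (fun x => x.val / Q = k.val)

/-- The coarse-graining map `F(σ)(k) = Σ_{x ∈ C_k} σ(x)`. -/
def cg (M Q : ℕ) (σ : Fin (M * Q) → Bool) (k : Fin M) : ℤ :=
  ∑ x ∈ cell M Q k, spin (σ x)

/-- The long-range Hamiltonian `H^l(σ) = -(1/2) Σ_{x ≠ y} J(x-y) σ(x) σ(y)`. -/
noncomputable def Hlong (M Q : ℕ) (J : ℤ → ℝ) (σ : Fin (M * Q) → Bool) : ℝ :=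
  -(1 / 2) * ∑ x : Fin (M * Q), ∑ y ∈ univ.filter (fun y => y ≠ x),
    J ((x.val : ℤ) - (y.val : ℤ)) * (spin (σ x) : ℝ) * (spin (σ y) : ℝ)

/-- Cell-averaged couplings `J̄(k,l)`. -/
noncomputable def Jbar (M Q : ℕ) (J : ℤ → ℝ) (k l : Fin M) : ℝ :=
  if k = l then
    (∑ x ∈ cell M Q k, ∑ y ∈ (cell M Q k).filter (fun y => y ≠ x),
        J ((x.val : ℤ) - (y.val : ℤ))) / ((Q : ℝ) * ((Q : ℝ) - 1))
  else
    (∑ x ∈ cell M Q k, ∑ y ∈ cell M Q l, J ((x.val : ℤ) - (y.val : ℤ))) / ((Q : ℝ) ^ 2)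

/-- The coarse-grained long-range Hamiltonian `H̄^{l,(0)}(η)`. -/
noncomputable def Hlong0 (M Q : ℕ) (J : ℤ → ℝ) (η : Fin M → ℤ) : ℝ :=
  -(1 / 2) * (∑ k : Fin M, ∑ l ∈ univ.filter (fun l => l ≠ k),
      Jbar M Q J k l * (η k : ℝ) * (η l : ℝ))
  - (1 / 2) * ∑ k : Fin M, Jbar M Q J k k * ((η k : ℝ) ^ 2 - (Q : ℝ))

section Cells

variable {M Q : ℕ}

def cellIdx (x : Fin (M * Q)) : Fin M :=
  ⟨x.val / Q, Nat.div_lt_of_lt_mul (Nat.mul_comm M Q ▸ x.isLt)⟩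

lemma mem_cell_iff_cellIdx_eq {k : Fin M} {x : Fin (M * Q)} :
    x ∈ cell M Q k ↔ cellIdx x = k := by
  simp [cell, cellIdx, Fin.ext_iff]

lemma mem_cell_cellIdx (x : Fin (M * Q)) : x ∈ cell M Q (cellIdx x) :=
  mem_cell_iff_cellIdx_eq.mpr rfl

lemma cell_eq_filter_cellIdx (k : Fin M) : cell M Q k = univ.filter (fun x => cellIdx x = k) := by
  ext x; simp [mem_cell_iff_cellIdx_eq]

lemma card_cell (k : Fin M) : #(cell M Q k) = Q := by
  rcases Nat.eq_zero_or_pos Q with rfl | hQ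
  · simp [cell]
  have hlt : ∀ n ∈ Ico (k.val * Q) (k.val * Q + Q), n < M * Q := fun n hn => by
    have := (mem_Ico.mp hn).2
    nlinarith [k.isLt]
  have : cell M Q k = (Ico (k.val * Q) (k.val * Q + Q)).attachFin hlt := by
    ext x
    simp only [cell, mem_filter, mem_univ, true_and, mem_attachFin, mem_Ico, Nat.div_eq_iff hQ]
    omega
  rw [this, card_attachFin, Nat.card_Ico]
  omega

lemma abs_sub_lt_of_mem_cell {k : Fin M} {x x' : Fin (M * Q)}
    (hx : x ∈ cell M Q k) (hx' : x' ∈ cell M Q k) : |(x.val : ℤ) - x'.val| < Q := by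
  have hQ : 0 < Q := Nat.pos_of_mul_pos_left x.pos
  simp only [cell, mem_filter, mem_univ, true_and, Nat.div_eq_iff hQ] at hx hx'
  rw [abs_lt]
  omega

end Cells

section Sums

variable {ι κ R : Type*} [Fintype ι] [Fintype κ] [DecidableEq κ] [CommRing R]

lemma sum_sum_mul_sum_fiberwise (c : ι → κ) (A : κ → κ → R) (f : ι → R) :
    ∑ k, ∑ l, A k l * (∑ x with c x = k, f x) * (∑ y with c y = l, f y)
      = ∑ x, ∑ y, A (c x) (c y) * f x * f y := by
  calc _ = ∑ k, ∑ x with c x = k, ∑ l, ∑ y with c y = l, A k l * f x * f y := by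
        refine sum_congr rfl fun k _ => ?_
        rw [sum_comm]
        refine sum_congr rfl fun l _ => ?_
        rw [mul_assoc, sum_mul_sum, mul_sum]
        simp only [mul_sum, mul_assoc]
    _ = ∑ k, ∑ x with c x = k, ∑ l, ∑ y with c y = l, A (c x) (c y) * f x * f y := by
        refine sum_congr rfl fun k _ => sum_congr rfl fun x hx => sum_congr rfl fun l _ =>
          sum_congr rfl fun y hy => ?_
        rw [(mem_filter.mp hx).2, (mem_filter.mp hy).2]
    _ = _ := by simp only [sum_fiberwise]

lemma sum_sum_filter_ne [DecidableEq ι] (g : ι → ι → R) :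
    ∑ x, ∑ y with y ≠ x, g x y = ∑ x, ∑ y, g x y - ∑ x, g x x := by
  rw [← sum_sub_distrib]
  exact sum_congr rfl fun x _ => by rw [filter_ne', sum_erase_eq_sub (mem_univ x)]

end Sums

section Hamiltonians

variable {M Q : ℕ}

lemma sum_comp_cellIdx (g : Fin M → ℝ) : ∑ x : Fin (M * Q), g (cellIdx x) = Q * ∑ k, g k := by
  rw [← sum_fiberwise univ cellIdx, mul_sum]
  refine sum_congr rfl fun k _ => ?_
  rw [sum_congr rfl fun x hx => by rw [(mem_filter.mp hx).2], sum_const, ← cell_eq_filter_cellIdx,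
    card_cell, nsmul_eq_mul]

lemma spin_mul_self (b : Bool) : (spin b : ℝ) * spin b = 1 := by
  cases b <;> simp [spin]

lemma abs_spin (b : Bool) : |(spin b : ℝ)| = 1 := by
  cases b <;> simp [spin]

lemma cast_cg (σ : Fin (M * Q) → Bool) (k : Fin M) :
    (cg M Q σ k : ℝ) = ∑ x with cellIdx x = k, (spin (σ x) : ℝ) := by
  rw [cg, ← cell_eq_filter_cellIdx, Int.cast_sum]

lemma Hlong0_cg (J : ℤ → ℝ) (σ : Fin (M * Q) → Bool) :
    Hlong0 M Q J (cg M Q σ) = -(1 / 2) * ∑ x : Fin (M * Q), ∑ y with y ≠ x,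
      Jbar M Q J (cellIdx x) (cellIdx y) * (spin (σ x) : ℝ) * (spin (σ y) : ℝ) := by
  have hdiag : ∑ x : Fin (M * Q), Jbar M Q J (cellIdx x) (cellIdx x) * (spin (σ x) : ℝ) * spin (σ x)
      = Q * ∑ k, Jbar M Q J k k := by
    simp only [mul_assoc, spin_mul_self, mul_one]
    exact sum_comp_cellIdx fun k => Jbar M Q J k k
  have hfull : ∑ k, ∑ l, Jbar M Q J k l * (cg M Q σ k : ℝ) * (cg M Q σ l : ℝ)
      = ∑ x : Fin (M * Q), ∑ y,
        Jbar M Q J (cellIdx x) (cellIdx y) * (spin (σ x) : ℝ) * (spin (σ y) : ℝ) := by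
    simp only [cast_cg]
    exact sum_sum_mul_sum_fiberwise _ _ _
  rw [Hlong0, sum_sum_filter_ne, sum_sum_filter_ne, hdiag, hfull]
  simp only [mul_sub, sum_sub_distrib, ← sum_mul, sq, mul_assoc]
  ring

lemma abs_Hlong_sub_Hlong0_cg_le (J : ℤ → ℝ) (σ : Fin (M * Q) → Bool) :
    |Hlong M Q J σ - Hlong0 M Q J (cg M Q σ)|
      ≤ 1 / 2 * ∑ x : Fin (M * Q), ∑ y with y ≠ x,
        |J ((x.val : ℤ) - y.val) - Jbar M Q J (cellIdx x) (cellIdx y)| := by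
  have hdiff : Hlong M Q J σ - Hlong0 M Q J (cg M Q σ) = -(1 / 2) * ∑ x : Fin (M * Q),
      ∑ y with y ≠ x, (J ((x.val : ℤ) - y.val) - Jbar M Q J (cellIdx x) (cellIdx y))
        * (spin (σ x) : ℝ) * (spin (σ y) : ℝ) := by
    rw [Hlong, Hlong0_cg]
    simp only [sub_mul, sum_sub_distrib]
    ring
  rw [hdiff, abs_mul, abs_neg, abs_of_pos (by norm_num : (0 : ℝ) < 1 / 2)]
  gcongr
  refine (abs_sum_le_sum_abs _ _).trans (sum_le_sum fun x _ => ?_)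
  refine (abs_sum_le_sum_abs _ _).trans (le_of_eq (sum_congr rfl fun y _ => ?_))
  rw [abs_mul, abs_mul, abs_spin, abs_spin, mul_one, mul_one]

end Hamiltonians

lemma abs_sub_sum_div_card_le {α : Type*} {s : Finset α} (hs : s.Nonempty) {a b : ℝ}
    {f : α → ℝ} (h : ∀ z ∈ s, |a - f z| ≤ b) : |a - (∑ z ∈ s, f z) / #s| ≤ b := by
  have hpos : (0 : ℝ) < #s := by exact_mod_cast hs.card_pos
  have hmean : a - (∑ z ∈ s, f z) / #s = (∑ z ∈ s, (a - f z)) / #s := by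
    rw [sum_sub_distrib, sum_const, nsmul_eq_mul]
    field_simp
  rw [hmean, abs_div, abs_of_pos hpos, div_le_iff₀ hpos]
  calc |∑ z ∈ s, (a - f z)| ≤ ∑ z ∈ s, |a - f z| := abs_sum_le_sum_abs _ _
    _ ≤ ∑ _z ∈ s, b := sum_le_sum h
    _ = b * #s := by rw [sum_const, nsmul_eq_mul, mul_comm]

section CellPairs

variable {M Q : ℕ}

variable (M Q) in
def cellPairs (k l : Fin M) : Finset (Fin (M * Q) × Fin (M * Q)) :=
  if k = l then (cell M Q k).offDiag else cell M Q k ×ˢ cell M Q l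

lemma Jbar_eq_sum_div_card (J : ℤ → ℝ) (k l : Fin M) :
    Jbar M Q J k l = (∑ p ∈ cellPairs M Q k l, J ((p.1.val : ℤ) - p.2.val)) / #(cellPairs M Q k l) := by
  unfold Jbar cellPairs
  split_ifs
  · rw [sum_finset_product _ (cell M Q k) (fun x => (cell M Q k).filter (fun y => y ≠ x))
      (fun p => by simp only [mem_offDiag, mem_filter, ne_comm])]
    rw [offDiag_card, card_cell, Nat.cast_sub (Nat.le_mul_self Q)]
    push_cast
    ring_nf
  · rw [sum_product, card_product, card_cell, card_cell]
    push_cast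
    ring_nf

lemma mem_cell_of_mem_cellPairs {k l : Fin M} {p : Fin (M * Q) × Fin (M * Q)}
    (hp : p ∈ cellPairs M Q k l) : p.1 ∈ cell M Q k ∧ p.2 ∈ cell M Q l := by
  unfold cellPairs at hp
  split_ifs at hp with hkl
  · subst hkl
    exact ⟨(mem_offDiag.mp hp).1, (mem_offDiag.mp hp).2.1⟩
  · exact mem_product.mp hp

lemma mk_mem_cellPairs_cellIdx {x y : Fin (M * Q)} (hxy : y ≠ x) :
    (x, y) ∈ cellPairs M Q (cellIdx x) (cellIdx y) := by
  unfold cellPairs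
  split_ifs with h
  · rw [mem_offDiag]
    exact ⟨mem_cell_cellIdx x, h ▸ mem_cell_cellIdx y, hxy.symm⟩
  · exact mem_product.mpr ⟨mem_cell_cellIdx x, mem_cell_cellIdx y⟩

end CellPairs

section Potential

variable {L l : ℝ} {V : ℝ → ℝ} {J : ℤ → ℝ}

lemma abs_sub_le_of_lipschitz (hL : 0 < L) (hl : 0 ≤ l)
    (hV : ∀ a b : ℝ, 0 ≤ a → 0 ≤ b → |V a - V b| ≤ l * |a - b|)
    (hJ : ∀ r : ℤ, J r = (1 / L) * V (|(r : ℝ)| / L)) (r r' : ℤ) :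
    |J r - J r'| ≤ l / L ^ 2 * |(r : ℝ) - r'| := by
  rw [hJ, hJ, ← mul_sub, abs_mul, abs_of_pos (one_div_pos.mpr hL)]
  have hscaled : |(|(r : ℝ)| / L - |(r' : ℝ)| / L)| ≤ |(r : ℝ) - r'| / L := by
    rw [div_sub_div_same, abs_div, abs_of_pos hL]
    exact div_le_div_of_nonneg_right (abs_abs_sub_abs_le_abs_sub _ _) hL.le
  calc 1 / L * |V (|(r : ℝ)| / L) - V (|(r' : ℝ)| / L)|
      ≤ 1 / L * (l * |(|(r : ℝ)| / L - |(r' : ℝ)| / L)|) := by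
        gcongr
        exact hV _ _ (by positivity) (by positivity)
    _ ≤ 1 / L * (l * (|(r : ℝ) - r'| / L)) := by gcongr
    _ = l / L ^ 2 * |(r : ℝ) - r'| := by ring

lemma eq_zero_of_lt_abs (hL : 0 < L) (hVsupp : ∀ r : ℝ, 1 < r → V r = 0)
    (hJ : ∀ r : ℤ, J r = (1 / L) * V (|(r : ℝ)| / L)) {r : ℤ} (hr : L < |(r : ℝ)|) : J r = 0 := by
  rw [hJ, hVsupp _ ((one_lt_div hL).mpr hr), mul_zero]

lemma abs_sub_le_ite_of_abs_sub_le (hL : 0 < L) (hl : 0 ≤ l)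
    (hV : ∀ a b : ℝ, 0 ≤ a → 0 ≤ b → |V a - V b| ≤ l * |a - b|)
    (hVsupp : ∀ r : ℝ, 1 < r → V r = 0)
    (hJ : ∀ r : ℤ, J r = (1 / L) * V (|(r : ℝ)| / L)) {r r' : ℤ} {d : ℝ}
    (hd : |(r : ℝ) - r'| ≤ d) :
    |J r - J r'| ≤ if |(r : ℝ)| ≤ L + d then l * d / L ^ 2 else 0 := by
  split_ifs with hnear
  · calc |J r - J r'| ≤ l / L ^ 2 * |(r : ℝ) - r'| := abs_sub_le_of_lipschitz hL hl hV hJ r r'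
      _ ≤ l / L ^ 2 * d := by gcongr
      _ = l * d / L ^ 2 := by ring
  · have hr' : L < |(r' : ℝ)| := by
      have := abs_sub_abs_le_abs_sub (r : ℝ) r'
      linarith
    rw [eq_zero_of_lt_abs hL hVsupp hJ (by linarith [abs_nonneg ((r : ℝ) - r')]), eq_zero_of_lt_abs hL hVsupp hJ hr',
      sub_zero, abs_zero]

end Potential

lemma card_filter_abs_sub_le {N : ℕ} (x : Fin N) {R : ℝ} (hR : 0 ≤ R) :
    (#((univ.filter (fun y => y ≠ x)).filter
      (fun y => |(((x.val : ℤ) - y.val : ℤ) : ℝ)| ≤ R)) : ℝ) ≤ 2 * R := by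
  set n := ⌊R⌋
  have hmaps : Set.MapsTo (fun y : Fin N => (y.val : ℤ))
      ((univ.filter (fun y => y ≠ x)).filter (fun y => |(((x.val : ℤ) - y.val : ℤ) : ℝ)| ≤ R))
      ((Icc ((x.val : ℤ) - n) (x.val + n)).erase x.val) := by
    intro y hy
    simp only [mem_coe, mem_filter, mem_univ, true_and] at hy
    have hyx : (y.val : ℤ) ≠ x.val := fun h => hy.1 (Fin.ext (by exact_mod_cast h))
    have hnear : |(x.val : ℤ) - y.val| ≤ n := Int.le_floor.mpr (by rw [Int.cast_abs]; exact hy.2)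
    rw [abs_le] at hnear
    simp only [mem_coe, mem_erase, mem_Icc]
    exact ⟨hyx, by omega, by omega⟩
  have hcard := card_le_card_of_injOn _ hmaps
    (fun a _ b _ hab => Fin.ext (by exact_mod_cast hab))
  have hn : 0 ≤ n := Int.floor_nonneg.mpr hR
  rw [card_erase_of_mem (by rw [mem_Icc]; omega), Int.card_Icc] at hcard
  have hcard' : (#((univ.filter (fun y => y ≠ x)).filter
      (fun y => |(((x.val : ℤ) - y.val : ℤ) : ℝ)| ≤ R)) : ℤ) ≤ 2 * n := by omega
  calc _ ≤ ((2 * n : ℤ) : ℝ) := by exact_mod_cast hcard'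
    _ ≤ 2 * R := by push_cast; linarith [Int.floor_le R]

lemma sum_ite_abs_sub_le {N : ℕ} (x : Fin N) {R c : ℝ} (hR : 0 ≤ R) (hc : 0 ≤ c) :
    ∑ y with y ≠ x, (if |(((x.val : ℤ) - y.val : ℤ) : ℝ)| ≤ R then c else 0) ≤ 2 * R * c := by
  rw [← sum_filter, sum_const, nsmul_eq_mul]
  exact mul_le_mul_of_nonneg_right (card_filter_abs_sub_le x hR) hc

lemma abs_sub_Jbar_le {M Q : ℕ} {L l : ℝ} {V : ℝ → ℝ} {J : ℤ → ℝ} (hL : 0 < L) (hl : 0 ≤ l)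
    (hV : ∀ a b : ℝ, 0 ≤ a → 0 ≤ b → |V a - V b| ≤ l * |a - b|)
    (hVsupp : ∀ r : ℝ, 1 < r → V r = 0)
    (hJ : ∀ r : ℤ, J r = (1 / L) * V (|(r : ℝ)| / L)) {x y : Fin (M * Q)} (hxy : y ≠ x) :
    |J ((x.val : ℤ) - y.val) - Jbar M Q J (cellIdx x) (cellIdx y)|
      ≤ if |(((x.val : ℤ) - y.val : ℤ) : ℝ)| ≤ L + 2 * Q then l * (2 * Q) / L ^ 2 else 0 := by
  rw [Jbar_eq_sum_div_card]
  refine abs_sub_sum_div_card_le ⟨_, mk_mem_cellPairs_cellIdx hxy⟩ fun p hp => ?_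
  obtain ⟨hx, hy⟩ := mem_cell_of_mem_cellPairs hp
  have hxx := abs_sub_lt_of_mem_cell (mem_cell_cellIdx x) hx
  have hyy := abs_sub_lt_of_mem_cell (mem_cell_cellIdx y) hy
  refine abs_sub_le_ite_of_abs_sub_le hL hl hV hVsupp hJ ?_
  have hdist : |((x.val : ℤ) - y.val) - ((p.1.val : ℤ) - p.2.val)| ≤ 2 * Q := by
    rw [abs_le, abs_lt] at *
    omega
  exact_mod_cast hdist

theorem statement7_general (M Q : ℕ)
    (L l : ℝ) (hL : 0 < L) (hl : 0 ≤ l) (hQL : (Q : ℝ) ≤ L)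
    (V : ℝ → ℝ) (hV : ∀ a b : ℝ, 0 ≤ a → 0 ≤ b → |V a - V b| ≤ l * |a - b|)
    (hVsupp : ∀ r : ℝ, 1 < r → V r = 0)
    (J : ℤ → ℝ) (hJ : ∀ r : ℤ, J r = (1 / L) * V (|(r : ℝ)| / L)) :
    ∀ σ : Fin (M * Q) → Bool,
      |Hlong M Q J σ - Hlong0 M Q J (cg M Q σ)| ≤ 6 * ((M * Q : ℕ) : ℝ) * Q * l / L := by
  intro σ
  set R : ℝ := L + 2 * Q
  set c : ℝ := l * (2 * Q) / L ^ 2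
  calc |Hlong M Q J σ - Hlong0 M Q J (cg M Q σ)|
      ≤ 1 / 2 * ∑ x : Fin (M * Q), ∑ y with y ≠ x,
        |J ((x.val : ℤ) - y.val) - Jbar M Q J (cellIdx x) (cellIdx y)| :=
        abs_Hlong_sub_Hlong0_cg_le J σ
    _ ≤ 1 / 2 * ∑ x : Fin (M * Q), ∑ y with y ≠ x,
        (if |(((x.val : ℤ) - y.val : ℤ) : ℝ)| ≤ R then c else 0) := by
        gcongr with x _ y hy
        exact abs_sub_Jbar_le hL hl hV hVsupp hJ (mem_filter.mp hy).2
    _ ≤ 1 / 2 * ∑ _x : Fin (M * Q), 2 * R * c := by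
        gcongr with x
        exact sum_ite_abs_sub_le x (by positivity) (by positivity)
    _ = (M * Q : ℕ) * (L + 2 * Q) * (l * Q) / L ^ 2 * 2 := by
        rw [sum_const, card_univ, Fintype.card_fin, nsmul_eq_mul]
        ring
    _ ≤ (M * Q : ℕ) * (3 * L) * (l * Q) / L ^ 2 * 2 := by gcongr; linarith
    _ = 6 * ((M * Q : ℕ) : ℝ) * Q * l / L := by
        field_simp
        ring

/-- for a compactly supported Lipschitz long-range potential and `Q ≤ L`,
the coarse-graining error of the long-range Hamiltonian is at most `6NQℓ/L`. -/
theorem statement7 (M Q : ℕ) (hM : 1 ≤ M) (hQ : 2 ≤ Q)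
    (L l : ℝ) (hL : 0 < L) (hl : 0 ≤ l) (hQL : (Q : ℝ) ≤ L)
    (V : ℝ → ℝ) (hV : ∀ a b : ℝ, 0 ≤ a → 0 ≤ b → |V a - V b| ≤ l * |a - b|)
    (hVsupp : ∀ r : ℝ, 1 < r → V r = 0)
    (J : ℤ → ℝ) (hJ : ∀ r : ℤ, J r = (1 / L) * V (|(r : ℝ)| / L)) :
    ∀ σ : Fin (M * Q) → Bool,
      |Hlong M Q J σ - Hlong0 M Q J (cg M Q σ)| ≤ 6 * ((M * Q : ℕ) : ℝ) * Q * l / L :=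
  statement7_general M Q L l hL hl hQL V hV hVsupp J hJ
end

section
/- In the single-cell nearest-neighbour setting with |λ| < 1, the error term f^s admits the a posteriori bound: for all s₋, s₊ ∈ {−1,+1}, |f^s(η; s₋, s₊)| ≤ λ² |Φ^{1,Q}(η) − Φ^1(η) Φ^Q(η)| / (1 − |λ|)². -/
open Finset

/-- Configurations of a `Q`-site cell with total magnetization `η`. -/
def cellSet (Q : ℕ) (η : ℤ) : Finset (Fin Q → Bool) :=
  univ.filter (fun τ => ∑ i, spin (τ i) = η)

/-- The first site of the cell. -/
def site1 (Q : ℕ) (hQ : 0 < Q) : Fin Q := ⟨0, hQ⟩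

/-- The last site of the cell. -/
def siteQ (Q : ℕ) (hQ : 0 < Q) : Fin Q := ⟨Q - 1, Nat.sub_lt hQ one_pos⟩

/-- The internal nearest-neighbour Hamiltonian `h(τ) = K Σ_{i=1}^{Q-1} τ(i) τ(i+1)`. -/
noncomputable def hcell (K : ℝ) (Q : ℕ) (τ : Fin Q → Bool) : ℝ :=
  K * ∑ i : Fin (Q - 1),
    ((spin (τ ⟨i.val, by have := i.isLt; omega⟩) : ℝ) *
     (spin (τ ⟨i.val + 1, by have := i.isLt; omega⟩) : ℝ))

/-- The free-boundary single-cell partition function `Ẑ(η)`. -/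
noncomputable def Zhat (β K : ℝ) (Q : ℕ) (η : ℤ) : ℝ :=
  ∑ τ ∈ cellSet Q η, Real.exp (-β * hcell K Q τ)

/-- `Φ^1(η)`: expectation of the first spin under `P̂_η`. -/
noncomputable def Phi1 (β K : ℝ) (Q : ℕ) (hQ : 0 < Q) (η : ℤ) : ℝ :=
  (∑ τ ∈ cellSet Q η, (spin (τ (site1 Q hQ)) : ℝ) * Real.exp (-β * hcell K Q τ)) /
    Zhat β K Q η

/-- `Φ^Q(η)`: expectation of the last spin under `P̂_η`. -/
noncomputable def PhiQ (β K : ℝ) (Q : ℕ) (hQ : 0 < Q) (η : ℤ) : ℝ :=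
  (∑ τ ∈ cellSet Q η, (spin (τ (siteQ Q hQ)) : ℝ) * Real.exp (-β * hcell K Q τ)) /
    Zhat β K Q η

/-- `Φ^{1,Q}(η)`: expectation of the product of the endpoint spins under `P̂_η`. -/
noncomputable def Phi1Q (β K : ℝ) (Q : ℕ) (hQ : 0 < Q) (η : ℤ) : ℝ :=
  (∑ τ ∈ cellSet Q η,
      ((spin (τ (site1 Q hQ)) * spin (τ (siteQ Q hQ)) : ℤ) : ℝ) *
        Real.exp (-β * hcell K Q τ)) /
    Zhat β K Q η

/-- The single-cell partition function with boundary conditions `s₋, s₊ ∈ {-1,0,+1}`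
(`0` encoding a free boundary). -/
noncomputable def ZB (β K : ℝ) (Q : ℕ) (hQ : 0 < Q) (η : ℤ) (sm sp : ℝ) : ℝ :=
  ∑ τ ∈ cellSet Q η,
    Real.exp (-β * (K * sm * (spin (τ (site1 Q hQ)) : ℝ) + hcell K Q τ +
      K * (spin (τ (siteQ Q hQ)) : ℝ) * sp))

/-! Writing each boundary factor as `exp (-y σ) = cosh y - σ sinh y` (for `σ = ±1`, `y = βK s`)
turns every `ZB` into `Ẑ` times a bilinear expression in `cosh`, `sinh` of the two boundary
couplings and the endpoint moments `Φ^1`, `Φ^Q`, `Φ^{1,Q}`. In the cross ratio everything cancels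
except `sinh y₋ sinh y₊ (Φ^{1,Q} - Φ^1 Φ^Q)`, divided by two factors `cosh y - sinh y Φ`, each at
least `cosh y - |sinh y| = cosh y (1 - |tanh y|) > 0` because `|Φ| ≤ 1`; for `s = ±1` this gives
the factor `|λ| / (1 - |λ|)` per boundary. -/

theorem exp_neg_mul_spin (y : ℝ) (b : Bool) :
    Real.exp (-(y * spin b)) = Real.cosh y - spin b * Real.sinh y := by
  cases b <;> simp [spin, Real.cosh_add_sinh, Real.cosh_sub_sinh]

theorem abs_tanh_mul_of_sq_eq_one (x s : ℝ) (hs : s = 1 ∨ s = -1) :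
    |Real.tanh (x * s)| = |Real.tanh x| := by
  rcases hs with rfl | rfl <;> simp [Real.tanh_neg]

theorem abs_sum_mul_le_sum {ι : Type*} (s : Finset ι) (u w : ι → ℝ)
    (hu : ∀ i ∈ s, |u i| ≤ 1) (hw : ∀ i ∈ s, 0 ≤ w i) :
    |∑ i ∈ s, u i * w i| ≤ ∑ i ∈ s, w i := by
  refine (abs_sum_le_sum_abs _ _).trans (sum_le_sum fun i hi => ?_)
  rw [abs_mul, abs_of_nonneg (hw i hi)]
  exact mul_le_of_le_one_left (hw i hi) (hu i hi)

theorem cosh_sub_abs_sinh_pos (x : ℝ) : 0 < Real.cosh x - |Real.sinh x| := by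
  rw [Real.abs_sinh, ← Real.cosh_abs]
  linarith [Real.sinh_lt_cosh |x|]

theorem cosh_sub_abs_sinh_le {x a : ℝ} (ha : |a| ≤ 1) :
    Real.cosh x - |Real.sinh x| ≤ Real.cosh x - Real.sinh x * a := by
  have : Real.sinh x * a ≤ |Real.sinh x| :=
    (le_abs_self _).trans (by rw [abs_mul]; exact mul_le_of_le_one_right (abs_nonneg _) ha)
  linarith

theorem abs_sinh_div_le {x a : ℝ} (ha : |a| ≤ 1) :
    |Real.sinh x| / (Real.cosh x - Real.sinh x * a) ≤ |Real.tanh x| / (1 - |Real.tanh x|) := by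
  have hc := Real.cosh_pos x
  have htanh :
      |Real.tanh x| / (1 - |Real.tanh x|) = |Real.sinh x| / (Real.cosh x - |Real.sinh x|) := by
    rw [Real.tanh_eq_sinh_div_cosh, abs_div, abs_of_pos hc]
    field_simp
  rw [htanh]
  exact div_le_div_of_nonneg_left (abs_nonneg _) (cosh_sub_abs_sinh_pos x)
    (cosh_sub_abs_sinh_le ha)

theorem cellSet_nonempty {Q : ℕ} {η : ℤ} (hη : |η| ≤ (Q : ℤ)) (hpar : (η + Q) % 2 = 0) :
    (cellSet Q η).Nonempty := by
  obtain ⟨hlo, hhi⟩ := abs_le.mp hη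
  obtain ⟨m, hm⟩ : ∃ m : ℕ, η + Q = 2 * m := ⟨((η + Q) / 2).toNat, by omega⟩
  have hmQ : m ≤ Q := by omega
  refine ⟨fun i => decide (i.val < m), mem_filter.mpr ⟨mem_univ _, ?_⟩⟩
  have hspin : ∀ i : Fin Q, spin (decide (i.val < m)) = if i.val < m then 1 else -1 := by
    intro i; by_cases h : i.val < m <;> simp [spin, h]
  rw [sum_congr rfl fun i _ => hspin i,
    Fin.sum_univ_eq_sum_range (fun i => if i < m then (1 : ℤ) else -1),
    ← sum_range_add_sum_Ico _ hmQ, sum_congr rfl fun i hi => if_pos (mem_range.mp hi),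
    sum_congr rfl fun i hi => if_neg (not_lt.mpr (mem_Ico.mp hi).1)]
  simp
  omega

theorem Zhat_pos (β K : ℝ) {Q : ℕ} {η : ℤ} (hη : |η| ≤ (Q : ℤ)) (hpar : (η + Q) % 2 = 0) :
    0 < Zhat β K Q η :=
  sum_pos (fun _ _ => Real.exp_pos _) (cellSet_nonempty hη hpar)

theorem abs_mean_spin_le_one (β K : ℝ) (Q : ℕ) (η : ℤ) (i : Fin Q) :
    |(∑ τ ∈ cellSet Q η, (spin (τ i) : ℝ) * Real.exp (-β * hcell K Q τ)) / Zhat β K Q η| ≤ 1 := by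
  rw [abs_div, Zhat, abs_of_nonneg (sum_nonneg fun _ _ => (Real.exp_pos _).le)]
  refine div_le_one_of_le₀
    (abs_sum_mul_le_sum _ _ _ (fun τ _ => ?_) fun _ _ => (Real.exp_pos _).le)
    (sum_nonneg fun _ _ => (Real.exp_pos _).le)
  cases τ i <;> simp [spin]

theorem ZB_eq_Zhat_mul (β K : ℝ) (Q : ℕ) (hQ : 0 < Q) (η : ℤ) (hZ : Zhat β K Q η ≠ 0)
    (sm sp : ℝ) :
    ZB β K Q hQ η sm sp = Zhat β K Q η *
      (Real.cosh (β * K * sm) * Real.cosh (β * K * sp)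
        - Real.sinh (β * K * sm) * Real.cosh (β * K * sp) * Phi1 β K Q hQ η
        - Real.cosh (β * K * sm) * Real.sinh (β * K * sp) * PhiQ β K Q hQ η
        + Real.sinh (β * K * sm) * Real.sinh (β * K * sp) * Phi1Q β K Q hQ η) := by
  rw [Phi1, PhiQ, Phi1Q]
  field_simp
  simp only [ZB, Zhat, mul_sum, sum_mul, ← sum_sub_distrib, ← sum_add_distrib]
  refine sum_congr rfl fun τ _ => ?_
  have hsplit : -β * (K * sm * (spin (τ (site1 Q hQ)) : ℝ) + hcell K Q τ
      + K * (spin (τ (siteQ Q hQ)) : ℝ) * sp)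
      = -(β * K * sm * spin (τ (site1 Q hQ))) + -(β * K * sp * spin (τ (siteQ Q hQ)))
        + -(β * hcell K Q τ) := by ring
  rw [hsplit, Real.exp_add, Real.exp_add, exp_neg_mul_spin, exp_neg_mul_spin]
  push_cast [neg_mul]
  ring

theorem abs_sinh_mul_sinh_mul_div_le {x y a b d : ℝ} (ha : |a| ≤ 1) (hb : |b| ≤ 1) :
    |Real.sinh x * Real.sinh y * d /
        ((Real.cosh y - Real.sinh y * b) * (Real.cosh x - Real.sinh x * a))|
      ≤ |Real.tanh x| / (1 - |Real.tanh x|) * (|Real.tanh y| / (1 - |Real.tanh y|)) * |d| := by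
  have hx := (cosh_sub_abs_sinh_pos x).trans_le (cosh_sub_abs_sinh_le ha)
  have hy := (cosh_sub_abs_sinh_pos y).trans_le (cosh_sub_abs_sinh_le hb)
  calc _ = |Real.sinh x| / (Real.cosh x - Real.sinh x * a)
          * (|Real.sinh y| / (Real.cosh y - Real.sinh y * b)) * |d| := by
        rw [abs_div, abs_mul, abs_mul, abs_of_pos (mul_pos hy hx)]
        field_simp
    _ ≤ _ := by
        have := Real.abs_tanh_lt_one x
        gcongr ?_ * ?_ * _
        exacts [abs_sinh_div_le ha, abs_sinh_div_le hb]

theorem ZB_ratio_sub_one {β K : ℝ} {Q : ℕ} (hQ : 0 < Q) {η : ℤ} (hZ : 0 < Zhat β K Q η)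
    (sm sp : ℝ) :
    ZB β K Q hQ η sm sp * ZB β K Q hQ η 0 0 / (ZB β K Q hQ η 0 sp * ZB β K Q hQ η sm 0) - 1
      = Real.sinh (β * K * sm) * Real.sinh (β * K * sp)
          * (Phi1Q β K Q hQ η - Phi1 β K Q hQ η * PhiQ β K Q hQ η)
        / ((Real.cosh (β * K * sp) - Real.sinh (β * K * sp) * PhiQ β K Q hQ η)
          * (Real.cosh (β * K * sm) - Real.sinh (β * K * sm) * Phi1 β K Q hQ η)) := by
  have hm : Real.cosh (β * K * sm) - Real.sinh (β * K * sm) * Phi1 β K Q hQ η ≠ 0 :=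
    ((cosh_sub_abs_sinh_pos _).trans_le
      (cosh_sub_abs_sinh_le (abs_mean_spin_le_one β K Q η _))).ne'
  have hp : Real.cosh (β * K * sp) - Real.sinh (β * K * sp) * PhiQ β K Q hQ η ≠ 0 :=
    ((cosh_sub_abs_sinh_pos _).trans_le
      (cosh_sub_abs_sinh_le (abs_mean_spin_le_one β K Q η _))).ne'
  simp only [ZB_eq_Zhat_mul β K Q hQ η hZ.ne', mul_zero, Real.cosh_zero, Real.sinh_zero,
    zero_mul, one_mul, mul_one, sub_zero, add_zero]
  have hden : Zhat β K Q η * (Real.cosh (β * K * sp) - Real.sinh (β * K * sp) * PhiQ β K Q hQ η)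
      * (Zhat β K Q η * (Real.cosh (β * K * sm) - Real.sinh (β * K * sm) * Phi1 β K Q hQ η))
      ≠ 0 := by simp [hZ.ne', hm, hp]
  rw [div_sub_one hden, div_eq_div_iff hden (mul_ne_zero hp hm)]
  ring

/-- a posteriori bound on the short-range error term `f^s`, with
`λ = tanh(βK)`. -/
theorem statement15 (β K : ℝ) (Q : ℕ) (hQ : 2 ≤ Q)
    (η : ℤ) (hη : |η| ≤ (Q : ℤ)) (hpar : (η + Q) % 2 = 0)
    (sm sp : ℝ) (hsm : sm = 1 ∨ sm = -1) (hsp : sp = 1 ∨ sp = -1) :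
    |ZB β K Q (by omega) η sm sp * ZB β K Q (by omega) η 0 0 /
        (ZB β K Q (by omega) η 0 sp * ZB β K Q (by omega) η sm 0) - 1|
      ≤ Real.tanh (β * K) ^ 2 *
          |Phi1Q β K Q (by omega) η - Phi1 β K Q (by omega) η * PhiQ β K Q (by omega) η| /
        (1 - |Real.tanh (β * K)|) ^ 2 := by
  rw [ZB_ratio_sub_one _ (Zhat_pos β K hη hpar)]
  refine (abs_sinh_mul_sinh_mul_div_le (abs_mean_spin_le_one β K Q η _)
    (abs_mean_spin_le_one β K Q η _)).trans_eq ?_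
  rw [abs_tanh_mul_of_sq_eq_one _ _ hsm, abs_tanh_mul_of_sq_eq_one _ _ hsp,
    ← sq_abs (Real.tanh (β * K)), mul_div_right_comm, ← sq, div_pow]
end
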